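/- arXiv:2405.12626 — 3 statements merged into one kernel-verified Lean document; each statement's English description precedes it below -/
import Mathlib

section
/- Let X be a Hausdorff topological vector space over ℝ, let T be a continuous linear operator on X, let A be a filter of subsets of ℕ, and let Z ⊆ X be a set with 0 ∈ Z, with the linear span of Z dense in X, and with T(Z) ⊆ Z. If for all nonempty relatively open sets U_0, U_1 ⊆ Z the set { m ∈ ℕ : U_0 ∩ T⁻ᵐ(U_1) ∩ Z ≠ ∅ } belongs to A, then for all nonempty open sets V_0, V_1 ⊆ X the set { m ∈ ℕ : V_0 ∩ T⁻ᵐ(V_1) ≠ ∅ } belongs to A. -/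
/-!
Approximate `x₀ ∈ V₀` and `x₁ ∈ V₁` by vectors of the span of `Z`. Padding with `0 ∈ Z`, both
are combinations `∑ cᵢ pᵢ` and `∑ cᵢ qᵢ` with the same coefficients and `pᵢ, qᵢ ∈ Z`. By
continuity of `r ↦ ∑ cᵢ rᵢ` there are open `U₀ᵢ ∋ pᵢ`, `U₁ᵢ ∋ qᵢ` with `∑ cᵢ (U₀ᵢ) ⊆ V₀` and
`∑ cᵢ (U₁ᵢ) ⊆ V₁`. The hypothesis puts each set of return times `m` from `U₀ᵢ ∩ Z` to `U₁ᵢ ∩ Z`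
into `𝒜`, hence also their finite intersection; for such `m`, if `rᵢ ∈ U₀ᵢ` and `Tᵐ rᵢ ∈ U₁ᵢ`,
then by linearity `∑ cᵢ rᵢ ∈ V₀` and `Tᵐ (∑ cᵢ rᵢ) ∈ V₁`.
-/

open Set Submodule

theorem iInter_mem_of_inter_mem {α ι : Type*} [Finite ι] {𝒜 : Set (Set α)} (huniv : univ ∈ 𝒜)
    (hUp : ∀ A B : Set α, A ∈ 𝒜 → A ⊆ B → B ∈ 𝒜)
    (hCap : ∀ A B : Set α, A ∈ 𝒜 → B ∈ 𝒜 → A ∩ B ∈ 𝒜) {A : ι → Set α} (hA : ∀ i, A i ∈ 𝒜) :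
    ⋂ i, A i ∈ 𝒜 :=
  (Filter.iInter_mem (f := ⟨𝒜, huniv, hUp _ _, hCap _ _⟩)).2 hA

theorem exists_sum_smul_eq_pair_of_mem_span {R M : Type*} [Semiring R] [AddCommMonoid M]
    [Module R M] {Z : Set M} (h0 : (0 : M) ∈ Z) {x y : M} (hx : x ∈ span R Z)
    (hy : y ∈ span R Z) :
    ∃ (n : ℕ) (c : Fin n → R) (p q : Fin n → M), (∀ i, p i ∈ Z) ∧ (∀ i, q i ∈ Z) ∧
      ∑ i, c i • p i = x ∧ ∑ i, c i • q i = y := by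
  obtain ⟨n, a, p, rfl⟩ := mem_span_set'.1 hx
  obtain ⟨k, b, q, rfl⟩ := mem_span_set'.1 hy
  refine ⟨n + k, Fin.append a b, Fin.append (fun i => p i) 0, Fin.append 0 (fun j => q j),
    ?_, ?_, ?_, ?_⟩
  · exact Fin.addCases (by simp) (by simp [h0])
  · exact Fin.addCases (by simp [h0]) (by simp)
  · simp [Fin.sum_univ_add]
  · simp [Fin.sum_univ_add]

theorem exists_isOpen_pi_subset_preimage_sum_smul {R M ι : Type*} [Fintype ι] [Semiring R]
    [AddCommMonoid M] [Module R M] [TopologicalSpace M] [ContinuousAdd M]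
    [ContinuousConstSMul R M] (c : ι → R) {V : Set M} (hV : IsOpen V) {p : ι → M}
    (hp : ∑ i, c i • p i ∈ V) :
    ∃ U : ι → Set M, (∀ i, IsOpen (U i) ∧ p i ∈ U i) ∧
      univ.pi U ⊆ (fun r => ∑ i, c i • r i) ⁻¹' V :=
  isOpen_pi_iff'.1 (hV.preimage (by fun_prop)) p hp

theorem nonempty_inter_preimage_of_sum_smul {R M N ι : Type*} [Fintype ι] [Semiring R]
    [AddCommMonoid M] [Module R M] [AddCommMonoid N] [Module R N] (g : M →ₗ[R] N) (c : ι → R)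
    {U₀ : ι → Set M} {U₁ : ι → Set N} {V₀ : Set M} {V₁ : Set N}
    (hV₀ : univ.pi U₀ ⊆ (fun r => ∑ i, c i • r i) ⁻¹' V₀)
    (hV₁ : univ.pi U₁ ⊆ (fun r => ∑ i, c i • r i) ⁻¹' V₁)
    (h : ∀ i, (U₀ i ∩ g ⁻¹' U₁ i).Nonempty) : (V₀ ∩ g ⁻¹' V₁).Nonempty := by
  choose r hr₀ hr₁ using h
  refine ⟨∑ i, c i • r i, hV₀ fun i _ => hr₀ i, ?_⟩
  have hg : g (∑ i, c i • r i) = ∑ i, c i • g (r i) := by simp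
  rw [mem_preimage, hg]
  exact hV₁ fun i _ => hr₁ i

theorem stmt_2_general {X : Type*} [AddCommGroup X] [Module ℝ X] [TopologicalSpace X]
    [IsTopologicalAddGroup X] [ContinuousSMul ℝ X]
    (T : X →L[ℝ] X)
    (𝒜 : Set (Set ℕ))
    (hUp : ∀ A B : Set ℕ, A ∈ 𝒜 → A ⊆ B → B ∈ 𝒜)
    (hCap : ∀ A B : Set ℕ, A ∈ 𝒜 → B ∈ 𝒜 → A ∩ B ∈ 𝒜)
    (Z : Set X) (h0 : (0 : X) ∈ Z)
    (hdense : Dense (Submodule.span ℝ Z : Set X))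
    (hZtrans : ∀ V0 V1 : Set X, IsOpen V0 → (V0 ∩ Z).Nonempty →
        IsOpen V1 → (V1 ∩ Z).Nonempty →
        {m : ℕ | ((V0 ∩ Z) ∩ (⇑T)^[m] ⁻¹' (V1 ∩ Z)).Nonempty} ∈ 𝒜) :
    ∀ V0 V1 : Set X, IsOpen V0 → V0.Nonempty → IsOpen V1 → V1.Nonempty →
        {m : ℕ | (V0 ∩ (⇑T)^[m] ⁻¹' V1).Nonempty} ∈ 𝒜 := by
  intro V0 V1 hV0 hV0ne hV1 hV1ne
  have hZ : (univ ∩ Z).Nonempty := ⟨0, trivial, h0⟩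
  have huniv : univ ∈ 𝒜 :=
    hUp _ _ (hZtrans univ univ isOpen_univ hZ isOpen_univ hZ) (subset_univ _)
  obtain ⟨x0, hx0span, hx0⟩ := hdense.exists_mem_open hV0 hV0ne
  obtain ⟨x1, hx1span, hx1⟩ := hdense.exists_mem_open hV1 hV1ne
  obtain ⟨n, c, p, q, hpZ, hqZ, rfl, rfl⟩ :=
    exists_sum_smul_eq_pair_of_mem_span h0 hx0span hx1span
  obtain ⟨U0, hU0, hU0V⟩ := exists_isOpen_pi_subset_preimage_sum_smul c hV0 hx0
  obtain ⟨U1, hU1, hU1V⟩ := exists_isOpen_pi_subset_preimage_sum_smul c hV1 hx1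
  refine hUp _ _ (iInter_mem_of_inter_mem huniv hUp hCap fun i => hZtrans (U0 i) (U1 i)
    (hU0 i).1 ⟨p i, (hU0 i).2, hpZ i⟩ (hU1 i).1 ⟨q i, (hU1 i).2, hqZ i⟩) fun m hm => ?_
  have hm' : ∀ i, (U0 i ∩ (⇑T)^[m] ⁻¹' U1 i).Nonempty := fun i =>
    (mem_iInter.1 hm i).mono <|
      inter_subset_inter inter_subset_left (preimage_mono inter_subset_left)
  rw [mem_ofPred_eq]
  rw [← ContinuousLinearMap.coe_coe, ← Module.End.coe_pow] at hm' ⊢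
  exact nonempty_inter_preimage_of_sum_smul _ c hU0V hU1V hm'

/-- (The `N = 1` case of the inheritance theorem.)
Let `X` be a Hausdorff topological vector space over `ℝ`, `T` a continuous linear
operator on `X`, `𝒜` a filter of subsets of `ℕ`, and `Z ⊆ X` a set with `0 ∈ Z`,
with dense linear span, and invariant under `T`.  If for all nonempty relatively
open sets `U₀, U₁ ⊆ Z` (i.e. sets of the form `V ∩ Z` with `V` open in `X`) the
set `{ m : U₀ ∩ T⁻ᵐ(U₁) ∩ Z ≠ ∅ }` belongs to `𝒜`, then for all nonempty open sets
`V₀, V₁ ⊆ X` the set `{ m : V₀ ∩ T⁻ᵐ(V₁) ≠ ∅ }` belongs to `𝒜`. -/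
theorem stmt_2 {X : Type*} [AddCommGroup X] [Module ℝ X] [TopologicalSpace X]
    [IsTopologicalAddGroup X] [ContinuousSMul ℝ X] [T2Space X]
    (T : X →L[ℝ] X)
    (𝒜 : Set (Set ℕ))
    (hInf : ∀ A ∈ 𝒜, A.Infinite)
    (hUp : ∀ A B : Set ℕ, A ∈ 𝒜 → A ⊆ B → B ∈ 𝒜)
    (hCap : ∀ A B : Set ℕ, A ∈ 𝒜 → B ∈ 𝒜 → A ∩ B ∈ 𝒜)
    (Z : Set X) (h0 : (0 : X) ∈ Z)
    (hdense : Dense (Submodule.span ℝ Z : Set X))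
    (hinv : Set.MapsTo T Z Z)
    (hZtrans : ∀ V0 V1 : Set X, IsOpen V0 → (V0 ∩ Z).Nonempty →
        IsOpen V1 → (V1 ∩ Z).Nonempty →
        {m : ℕ | ((V0 ∩ Z) ∩ (⇑T)^[m] ⁻¹' (V1 ∩ Z)).Nonempty} ∈ 𝒜) :
    ∀ V0 V1 : Set X, IsOpen V0 → V0.Nonempty → IsOpen V1 → V1.Nonempty →
        {m : ℕ | (V0 ∩ (⇑T)^[m] ⁻¹' V1).Nonempty} ∈ 𝒜 :=
  stmt_2_general T 𝒜 hUp hCap Z h0 hdense hZtrans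
end

section
/- Let Z be a Hausdorff topological space with no isolated points and let f_1,…,f_N be continuous self-maps of Z. Then f_1,…,f_N are disjoint weakly mixing of order r if and only if the family A consisting of all subsets of ℕ that contain an intersection of r disjoint return sets (i.e., all sets of the form A_1 ∩ … ∩ A_r with each A_j a superset of some disjoint return set) is a Furstenberg family. In that case, f_1,…,f_N are disjoint A-transitive. -/
/-!
Disjoint weak mixing of order `r` says exactly that every intersection of `r` disjoint return
sets is nonempty, since basic open sets of `Z^r` are boxes. Upward closure of the family is
automatic, so the content is that these intersections are then infinite. Given a bound `M`,
Hausdorffness and the absence of isolated points let us shrink the open sets `U₀ ⊆ Z` and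
`U₁ ⊆ Z` of one return set so that `f₁ⁿ(U₀)` misses `U₁` for all `n ≤ M`, one `n` at a time:
the shrunken intersection is nonempty by weak mixing and consists of times beyond `M`.
-/

/-- The disjoint return set `d-N(U₀; U₁,…,U_N)` of the tuple `f`. -/
def dRet {Z : Type*} {N : ℕ} (f : Fin N → Z → Z) (U0 : Set Z) (U : Fin N → Set Z) :
    Set ℕ :=
  {m | ∃ z ∈ U0, ∀ i, (f i)^[m] z ∈ U i}

/-- The tuple `f 1,…,f N` is disjoint transitive: every disjoint return set is nonempty. -/
def dTrans {Z : Type*} [TopologicalSpace Z] {N : ℕ} (f : Fin N → Z → Z) : Prop :=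
  ∀ (U0 : Set Z) (U : Fin N → Set Z), IsOpen U0 → U0.Nonempty →
    (∀ i, IsOpen (U i)) → (∀ i, (U i).Nonempty) → (dRet f U0 U).Nonempty

/-- The `r`-fold product map `g × ⋯ × g` on `Z^r`. -/
def prodPow {Z : Type*} (r : ℕ) (g : Z → Z) : (Fin r → Z) → (Fin r → Z) :=
  fun x j => g (x j)

/-- The tuple `f 1,…,f N` is disjoint weakly mixing of order `r`: the `N`-tuple of the
`r`-fold products `f i × ⋯ × f i` on `Z^r` is disjoint transitive. -/
def dWM {Z : Type*} [TopologicalSpace Z] {N : ℕ} (r : ℕ) (f : Fin N → Z → Z) : Prop :=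
  dTrans (fun i => prodPow r (f i))

open Set Function

section ReturnSets

variable {Z : Type*} {N : ℕ}

@[simp]
theorem prodPow_iterate_apply (r : ℕ) (g : Z → Z) (m : ℕ) (x : Fin r → Z) (j : Fin r) :
    (prodPow r g)^[m] x j = g^[m] (x j) := by
  induction m generalizing x with
  | zero => rfl
  | succ m ih => exact ih (prodPow r g x)

theorem dRet_mono (f : Fin N → Z → Z) {U0 V0 : Set Z} {U V : Fin N → Set Z}
    (h0 : U0 ⊆ V0) (h : ∀ i, U i ⊆ V i) : dRet f U0 U ⊆ dRet f V0 V := by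
  rintro m ⟨z, hz, hzi⟩
  exact ⟨z, h0 hz, fun i => h i (hzi i)⟩

theorem dRet_eq_univ [IsEmpty (Fin N)] (f : Fin N → Z → Z) {U0 : Set Z} (hU0 : U0.Nonempty)
    (U : Fin N → Set Z) : dRet f U0 U = univ := by
  obtain ⟨z, hz⟩ := hU0
  exact eq_univ_of_forall fun _ => ⟨z, hz, isEmptyElim⟩

end ReturnSets

theorem IsOpen.exists_univ_pi_subset {ι : Type*} [Finite ι] {Z : Type*} [TopologicalSpace Z]
    {s : Set (ι → Z)} (hs : IsOpen s) (hne : s.Nonempty) :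
    ∃ W : ι → Set Z, (∀ j, IsOpen (W j)) ∧ (∀ j, (W j).Nonempty) ∧ univ.pi W ⊆ s := by
  obtain ⟨a, ha⟩ := hne
  obtain ⟨W, hW, hWs⟩ := isOpen_pi_iff'.mp hs a ha
  exact ⟨W, fun j => (hW j).1, fun j => ⟨a j, (hW j).2⟩, hWs⟩

theorem dWM_iff_iInter_dRet_nonempty {Z : Type*} [TopologicalSpace Z] {N : ℕ} (r : ℕ)
    (f : Fin N → Z → Z) :
    dWM r f ↔ ∀ (U0 : Fin r → Set Z) (U : Fin r → Fin N → Set Z),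
      (∀ j, IsOpen (U0 j)) → (∀ j, (U0 j).Nonempty) →
      (∀ j i, IsOpen (U j i)) → (∀ j i, (U j i).Nonempty) →
      (⋂ j, dRet f (U0 j) (U j)).Nonempty := by
  constructor
  · intro h U0 U hU0o hU0n hUo hUn
    obtain ⟨m, z, hz0, hzi⟩ := h (univ.pi U0) (fun i => univ.pi fun j => U j i)
      (isOpen_set_pi finite_univ fun j _ => hU0o j) (univ_pi_nonempty_iff.mpr hU0n)
      (fun i => isOpen_set_pi finite_univ fun j _ => hUo j i)
      (fun i => univ_pi_nonempty_iff.mpr fun j => hUn j i)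
    refine ⟨m, mem_iInter.mpr fun j => ⟨z j, hz0 j (mem_univ j), fun i => ?_⟩⟩
    simpa using hzi i j (mem_univ j)
  · intro h V0 V hV0o hV0n hVo hVn
    obtain ⟨W0, hW0o, hW0n, hW0⟩ := hV0o.exists_univ_pi_subset hV0n
    choose W hWo hWn hW using fun i => (hVo i).exists_univ_pi_subset (hVn i)
    obtain ⟨m, hm⟩ := h W0 (fun j i => W i j) hW0o hW0n (fun j i => hWo i j)
      (fun j i => hWn i j)
    choose z hz0 hzi using mem_iInter.mp hm
    exact ⟨m, z, hW0 fun j _ => hz0 j, fun i => hW i fun j _ => by simpa using hzi j i⟩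

section Shrinking

variable {X Y : Type*} [TopologicalSpace X] [TopologicalSpace Y] [T2Space Y]

theorem exists_isOpen_subset_disjoint_preimage (hiso : ∀ y : Y, ¬ IsOpen ({y} : Set Y))
    {g : X → Y} (hg : Continuous g) {V0 : Set X} {V1 : Set Y}
    (hV0o : IsOpen V0) (hV0n : V0.Nonempty) (hV1o : IsOpen V1) (hV1n : V1.Nonempty) :
    ∃ W0 ⊆ V0, ∃ W1 ⊆ V1, IsOpen W0 ∧ W0.Nonempty ∧ IsOpen W1 ∧ W1.Nonempty ∧
      Disjoint W0 (g ⁻¹' W1) := by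
  obtain ⟨x, hx⟩ := hV0n
  obtain ⟨y, hy, hyx⟩ : ∃ y ∈ V1, y ≠ g x := by
    by_contra! h
    exact hiso (g x) (eq_singleton_iff_nonempty_unique_mem.mpr ⟨hV1n, h⟩ ▸ hV1o)
  obtain ⟨Wy, Wx, hWyo, hWxo, hyW, hxW, hW⟩ := t2_separation hyx
  refine ⟨V0 ∩ g ⁻¹' Wx, inter_subset_left, V1 ∩ Wy, inter_subset_left,
    hV0o.inter (hWxo.preimage hg), ⟨x, hx, hxW⟩, hV1o.inter hWyo, ⟨y, hy, hyW⟩, ?_⟩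
  exact disjoint_left.mpr fun z hz hgz => disjoint_left.mp hW hgz.2 hz.2

theorem exists_isOpen_subset_forall_lt_disjoint_preimage
    (hiso : ∀ y : Y, ¬ IsOpen ({y} : Set Y)) {g : ℕ → X → Y} (hg : ∀ n, Continuous (g n))
    {V0 : Set X} {V1 : Set Y}
    (hV0o : IsOpen V0) (hV0n : V0.Nonempty) (hV1o : IsOpen V1) (hV1n : V1.Nonempty) (M : ℕ) :
    ∃ W0 ⊆ V0, ∃ W1 ⊆ V1, IsOpen W0 ∧ W0.Nonempty ∧ IsOpen W1 ∧ W1.Nonempty ∧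
      ∀ n < M, Disjoint W0 (g n ⁻¹' W1) := by
  induction M with
  | zero => exact ⟨V0, subset_rfl, V1, subset_rfl, hV0o, hV0n, hV1o, hV1n, by simp⟩
  | succ M ih =>
    obtain ⟨A0, hA0, A1, hA1, hA0o, hA0n, hA1o, hA1n, hA⟩ := ih
    obtain ⟨W0, hW0, W1, hW1, hW0o, hW0n, hW1o, hW1n, hW⟩ :=
      exists_isOpen_subset_disjoint_preimage hiso (hg M) hA0o hA0n hA1o hA1n
    refine ⟨W0, hW0.trans hA0, W1, hW1.trans hA1, hW0o, hW0n, hW1o, hW1n, fun n hn => ?_⟩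
    rcases Nat.lt_succ_iff_lt_or_eq.mp hn with hn | rfl
    · exact (hA n hn).mono hW0 (preimage_mono hW1)
    · exact hW

end Shrinking

section Infinite

variable {Z : Type*} [TopologicalSpace Z] [T2Space Z] {N : ℕ} {f : Fin N → Z → Z}

theorem exists_isOpen_subset_dRet_subset_Ioi (hiso : ∀ z : Z, ¬ IsOpen ({z} : Set Z))
    (hf : ∀ i, Continuous (f i)) (i0 : Fin N) {U0 : Set Z} {U : Fin N → Set Z}
    (hU0o : IsOpen U0) (hU0n : U0.Nonempty) (hUo : ∀ i, IsOpen (U i))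
    (hUn : ∀ i, (U i).Nonempty) (M : ℕ) :
    ∃ V0 ⊆ U0, ∃ V : Fin N → Set Z, (∀ i, V i ⊆ U i) ∧ IsOpen V0 ∧ V0.Nonempty ∧
      (∀ i, IsOpen (V i)) ∧ (∀ i, (V i).Nonempty) ∧ dRet f V0 V ⊆ Ioi M := by
  obtain ⟨V0, hV0, B, hB, hV0o, hV0n, hBo, hBn, hdisj⟩ :=
    exists_isOpen_subset_forall_lt_disjoint_preimage hiso (fun n => (hf i0).iterate n)
      hU0o hU0n (hUo i0) (hUn i0) (M + 1)
  refine ⟨V0, hV0, update U i0 B, ?_, hV0o, hV0n, ?_, ?_, ?_⟩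
  · exact (forall_update_iff U fun i s => s ⊆ U i).mpr ⟨hB, fun i _ => subset_rfl⟩
  · exact (forall_update_iff U fun _ s => IsOpen s).mpr ⟨hBo, fun i _ => hUo i⟩
  · exact (forall_update_iff U fun _ s => s.Nonempty).mpr ⟨hBn, fun i _ => hUn i⟩
  · rintro m ⟨z, hz, hzi⟩
    by_contra hm
    have hz' : (f i0)^[m] z ∈ B := by simpa using hzi i0
    exact disjoint_left.mp (hdisj m (Nat.lt_succ_of_le (not_lt.mp hm))) hz hz'

theorem dWM.iInter_dRet_infinite (hiso : ∀ z : Z, ¬ IsOpen ({z} : Set Z))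
    (hf : ∀ i, Continuous (f i)) {r : ℕ} (hwm : dWM r f)
    (U0 : Fin r → Set Z) (U : Fin r → Fin N → Set Z)
    (hU0o : ∀ j, IsOpen (U0 j)) (hU0n : ∀ j, (U0 j).Nonempty)
    (hUo : ∀ j i, IsOpen (U j i)) (hUn : ∀ j i, (U j i).Nonempty) :
    (⋂ j, dRet f (U0 j) (U j)).Infinite := by
  rcases isEmpty_or_nonempty (Fin N) with hN | ⟨⟨i0⟩⟩
  · simpa [dRet_eq_univ f (hU0n _)] using infinite_univ
  rcases isEmpty_or_nonempty (Fin r) with hr | ⟨⟨j0⟩⟩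
  · simpa using infinite_univ
  refine infinite_of_forall_exists_gt fun M => ?_
  choose V0 hV0 V hV hV0o hV0n hVo hVn hVM using fun j =>
    exists_isOpen_subset_dRet_subset_Ioi hiso hf i0 (hU0o j) (hU0n j) (hUo j) (hUn j) M
  obtain ⟨m, hm⟩ := (dWM_iff_iInter_dRet_nonempty r f).mp hwm V0 V hV0o hV0n hVo hVn
  rw [mem_iInter] at hm
  exact ⟨m, mem_iInter.mpr fun j => dRet_mono f (hV0 j) (hV j) (hm j), hVM j0 (hm j0)⟩

end Infinite

/-- Let `Z` be Hausdorff with no isolated points and `f 1,…,f N`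
continuous.  Then `f 1,…,f N` are disjoint weakly mixing of order `r` iff the family
`𝒜` of all subsets of `ℕ` containing an intersection of `r` disjoint return sets is a
Furstenberg family (every member infinite; upward closed).  In that case, `f 1,…,f N`
are disjoint `𝒜`-transitive. -/
theorem stmt_5 {Z : Type*} [TopologicalSpace Z] [T2Space Z]
    (hiso : ∀ z : Z, ¬ IsOpen ({z} : Set Z))
    {N : ℕ} (r : ℕ) (hr : 1 ≤ r) (f : Fin N → Z → Z) (hf : ∀ i, Continuous (f i))
    (𝒜 : Set (Set ℕ))
    (h𝒜 : 𝒜 = {B : Set ℕ | ∃ (U0 : Fin r → Set Z) (U : Fin r → Fin N → Set Z),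
        (∀ j, IsOpen (U0 j)) ∧ (∀ j, (U0 j).Nonempty) ∧
        (∀ j i, IsOpen (U j i)) ∧ (∀ j i, (U j i).Nonempty) ∧
        (⋂ j, dRet f (U0 j) (U j)) ⊆ B}) :
    (dWM r f ↔
      ((∀ B ∈ 𝒜, B.Infinite) ∧ ∀ B C : Set ℕ, B ∈ 𝒜 → B ⊆ C → C ∈ 𝒜))
    ∧ (dWM r f →
      ∀ (U0 : Set Z) (U : Fin N → Set Z), IsOpen U0 → U0.Nonempty →
        (∀ i, IsOpen (U i)) → (∀ i, (U i).Nonempty) → dRet f U0 U ∈ 𝒜) := by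
  subst h𝒜
  refine ⟨⟨fun hwm => ⟨?_, ?_⟩, fun ⟨hinf, _⟩ => ?_⟩, ?_⟩
  · rintro B ⟨U0, U, hU0o, hU0n, hUo, hUn, hB⟩
    exact (hwm.iInter_dRet_infinite hiso hf U0 U hU0o hU0n hUo hUn).mono hB
  · rintro B C ⟨U0, U, hU0o, hU0n, hUo, hUn, hB⟩ hBC
    exact ⟨U0, U, hU0o, hU0n, hUo, hUn, hB.trans hBC⟩
  · refine (dWM_iff_iInter_dRet_nonempty r f).mpr fun U0 U hU0o hU0n hUo hUn => ?_
    exact (hinf _ ⟨U0, U, hU0o, hU0n, hUo, hUn, subset_rfl⟩).nonempty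
  · intro _ U0 U hU0o hU0n hUo hUn
    exact ⟨fun _ => U0, fun _ => U, fun _ => hU0o, fun _ => hU0n, fun _ => hUo,
      fun _ => hUn, iInter_subset _ ⟨0, hr⟩⟩
end

section
/- Let Z be a Hausdorff topological space with no isolated points and let f_1,…,f_N be continuous self-maps of Z that are disjoint weakly mixing of order r but not disjoint weakly mixing of order r+1. Then there is no weakly mixing continuous map g : Z → Z satisfying g ∘ f_i = f_i ∘ g for all i = 1,…,N; that is, no weakly mixing map lies in the intersection of the commutators of f_1,…,f_N. -/
/-- `g` is weakly mixing: `g × g` is topologically transitive on `Z × Z`. -/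
def wMix {Z : Type*} [TopologicalSpace Z] (g : Z → Z) : Prop :=
  ∀ W1 W2 : Set (Z × Z), IsOpen W1 → W1.Nonempty → IsOpen W2 → W2.Nonempty →
    ∃ n : ℕ, ((Prod.map g g)^[n] '' W1 ∩ W2).Nonempty

open Set

private lemma prodPow_iterate {Z : Type*} (r : ℕ) (g : Z → Z) (m : ℕ) :
    (prodPow r g)^[m] = prodPow r (g^[m]) := by
  induction m with
  | zero => rfl
  | succ m ih => funext x j; simp [Function.iterate_succ_apply', ih, prodPow]

private lemma prodmap_iterate {Z : Type*} (g : Z → Z) (n : ℕ) :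
    (Prod.map g g)^[n] = Prod.map (g^[n]) (g^[n]) := by
  induction n with
  | zero => rfl
  | succ n ih => funext p; simp [Function.iterate_succ_apply', ih, Prod.map]

private lemma exists_box {Z : Type*} [TopologicalSpace Z] {k : ℕ}
    {s : Set (Fin k → Z)} (hs : IsOpen s) (hne : s.Nonempty) :
    ∃ V : Fin k → Set Z, (∀ j, IsOpen (V j)) ∧ (∀ j, (V j).Nonempty) ∧
      Set.univ.pi V ⊆ s := by
  obtain ⟨x, hx⟩ := hne
  obtain ⟨u, hu, hsub⟩ := isOpen_pi_iff'.mp hs x hx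
  exact ⟨u, fun j => (hu j).1, fun j => ⟨x j, (hu j).2⟩, hsub⟩

private lemma wm_trans {Z : Type*} [TopologicalSpace Z] [Nonempty Z] {g : Z → Z}
    (hwm : wMix g) {U V : Set Z} (hU : IsOpen U) (hUne : U.Nonempty)
    (hV : IsOpen V) (hVne : V.Nonempty) : ∃ n, ∃ x ∈ U, g^[n] x ∈ V := by
  obtain ⟨n, p, ⟨q, hq, hpq⟩, hp2⟩ := hwm (U ×ˢ Set.univ) (V ×ˢ Set.univ)
    (hU.prod isOpen_univ) (hUne.prod univ_nonempty)
    (hV.prod isOpen_univ) (hVne.prod univ_nonempty)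
  rw [prodmap_iterate] at hpq
  refine ⟨n, q.1, hq.1, ?_⟩
  have : p.1 = g^[n] q.1 := by rw [← hpq]; rfl
  rw [← this]; exact hp2.1

private lemma wm_combine {Z : Type*} [TopologicalSpace Z] {g : Z → Z}
    (hg : Continuous g) (hwm : wMix g)
    {A1 B1 A2 B2 : Set Z} (hA1 : IsOpen A1) (hA1n : A1.Nonempty)
    (hB1 : IsOpen B1) (hB1n : B1.Nonempty) (hA2 : IsOpen A2) (hA2n : A2.Nonempty)
    (hB2 : IsOpen B2) (hB2n : B2.Nonempty) :
    ∃ U V : Set Z, IsOpen U ∧ U.Nonempty ∧ IsOpen V ∧ V.Nonempty ∧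
      ∀ m x, x ∈ U → g^[m] x ∈ V →
        (∃ y ∈ A1, g^[m] y ∈ B1) ∧ (∃ y ∈ A2, g^[m] y ∈ B2) := by
  obtain ⟨n, p, ⟨q, hq, hpq⟩, hp2⟩ := hwm (A1 ×ˢ B1) (A2 ×ˢ B2)
    (hA1.prod hB1) (hA1n.prod hB1n) (hA2.prod hB2) (hA2n.prod hB2n)
  rw [prodmap_iterate] at hpq
  have h1 : g^[n] q.1 ∈ A2 := by
    have : p.1 = g^[n] q.1 := by rw [← hpq]; rfl
    rw [← this]; exact hp2.1
  have h2 : g^[n] q.2 ∈ B2 := by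
    have : p.2 = g^[n] q.2 := by rw [← hpq]; rfl
    rw [← this]; exact hp2.2
  refine ⟨A1 ∩ g^[n] ⁻¹' A2, B1 ∩ g^[n] ⁻¹' B2,
    hA1.inter (hA2.preimage (hg.iterate n)), ⟨q.1, hq.1, h1⟩,
    hB1.inter (hB2.preimage (hg.iterate n)), ⟨q.2, hq.2, h2⟩,
    fun m x hx hgx => ⟨⟨x, hx.1, hgx.1⟩, ⟨g^[n] x, hx.2, ?_⟩⟩⟩
  have hc : g^[m] (g^[n] x) = g^[n] (g^[m] x) := by
    rw [← Function.iterate_add_apply, ← Function.iterate_add_apply, Nat.add_comm]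
  rw [hc]
  exact hgx.2

private lemma wm_multi {Z : Type*} [TopologicalSpace Z] [Nonempty Z] {g : Z → Z}
    (hg : Continuous g) (hwm : wMix g) :
    ∀ (k : ℕ) (A B : Fin k → Set Z), (∀ j, IsOpen (A j)) → (∀ j, (A j).Nonempty) →
      (∀ j, IsOpen (B j)) → (∀ j, (B j).Nonempty) →
      ∃ U V : Set Z, IsOpen U ∧ U.Nonempty ∧ IsOpen V ∧ V.Nonempty ∧
        ∀ m x, x ∈ U → g^[m] x ∈ V → ∀ j, ∃ y ∈ A j, g^[m] y ∈ B j := by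
  intro k
  induction k with
  | zero =>
    intro A B _ _ _ _
    exact ⟨univ, univ, isOpen_univ, univ_nonempty, isOpen_univ, univ_nonempty,
      fun m x _ _ j => j.elim0⟩
  | succ k ih =>
    intro A B hA hAn hB hBn
    obtain ⟨U, V, h1, h2, h3, h4, hUV⟩ := ih (A ∘ Fin.succ) (B ∘ Fin.succ)
      (fun j => hA _) (fun j => hAn _) (fun j => hB _) (fun j => hBn _)
    obtain ⟨U', V', h1', h2', h3', h4', hcomb⟩ := wm_combine hg hwm h1 h2 h3 h4
      (hA 0) (hAn 0) (hB 0) (hBn 0)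
    refine ⟨U', V', h1', h2', h3', h4', fun m x hx hgx j => ?_⟩
    obtain ⟨⟨y, hy, hgy⟩, h0⟩ := hcomb m x hx hgx
    refine Fin.cases h0 (fun j' => hUV m y hy hgy j') j

/-- Let `Z` be Hausdorff with no isolated points and `f 1,…,f N`
continuous self-maps that are disjoint weakly mixing of order `r` but not of order
`r + 1`.  Then no weakly mixing continuous map `g : Z → Z` commutes with all the
`f i`, i.e. no weakly mixing map lies in the intersection of the commutators. -/
theorem stmt_8 {Z : Type*} [TopologicalSpace Z] [T2Space Z]
    (hiso : ∀ z : Z, ¬ IsOpen ({z} : Set Z))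
    {N : ℕ} (r : ℕ) (hr : 1 ≤ r) (f : Fin N → Z → Z) (hf : ∀ i, Continuous (f i))
    (hwm : dWM r f) (hnwm : ¬ dWM (r + 1) f) :
    ¬ ∃ g : Z → Z, Continuous g ∧ wMix g ∧ ∀ i, g ∘ f i = f i ∘ g := by
  rintro ⟨g, hg, hgwm, hcomm⟩
  apply hnwm
  by_cases hZ : Nonempty Z
  swap
  · intro U0 U hU0 hU0n _ _
    obtain ⟨z, _⟩ := hU0n
    exact (hZ ⟨z 0⟩).elim
  haveI := hZ
  obtain ⟨s, rfl⟩ : ∃ s, r = s + 1 := ⟨r - 1, (Nat.succ_pred_eq_of_pos hr).symm⟩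
  intro U0 U hU0 hU0n hU hUn
  obtain ⟨V0, hV0o, hV0n, hV0sub⟩ := exists_box hU0 hU0n
  choose W hWo hWn hWsub using fun i => exists_box (hU i) (hUn i)
  -- simultaneous returns of g for the (N+1) pairs (V0 c, V0 l), (W i c, W i l)
  have hAo : ∀ j : Fin (N + 1), IsOpen
      ((Fin.cons (V0 (Fin.castSucc (Fin.last s)))
        (fun i => W i (Fin.castSucc (Fin.last s))) : Fin (N+1) → Set Z) j) := by
    intro j
    induction j using Fin.cases with
    | zero => simpa using hV0o _
    | succ i => simpa using hWo i _
  have hAn : ∀ j : Fin (N + 1),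
      ((Fin.cons (V0 (Fin.castSucc (Fin.last s)))
        (fun i => W i (Fin.castSucc (Fin.last s))) : Fin (N+1) → Set Z) j).Nonempty := by
    intro j
    induction j using Fin.cases with
    | zero => simpa using hV0n _
    | succ i => simpa using hWn i _
  have hBo : ∀ j : Fin (N + 1), IsOpen
      ((Fin.cons (V0 (Fin.last (s + 1)))
        (fun i => W i (Fin.last (s + 1))) : Fin (N+1) → Set Z) j) := by
    intro j
    induction j using Fin.cases with
    | zero => simpa using hV0o _
    | succ i => simpa using hWo i _
  have hBn : ∀ j : Fin (N + 1),
      ((Fin.cons (V0 (Fin.last (s + 1)))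
        (fun i => W i (Fin.last (s + 1))) : Fin (N+1) → Set Z) j).Nonempty := by
    intro j
    induction j using Fin.cases with
    | zero => simpa using hV0n _
    | succ i => simpa using hWn i _
  obtain ⟨P, Q, hPo, hPn, hQo, hQn, hPQ⟩ := wm_multi hg hgwm (N + 1) _ _ hAo hAn hBo hBn
  obtain ⟨n, x, hxP, hxQ⟩ := wm_trans hgwm hPo hPn hQo hQn
  have key := hPQ n x hxP hxQ
  have key0 : ∃ y ∈ V0 (Fin.castSucc (Fin.last s)), g^[n] y ∈ V0 (Fin.last (s + 1)) := by
    simpa using key 0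
  have keyi : ∀ i : Fin N,
      ∃ y ∈ W i (Fin.castSucc (Fin.last s)), g^[n] y ∈ W i (Fin.last (s + 1)) := by
    intro i; simpa using key i.succ
  classical
  -- shrunken boxes of dimension s+1
  set V0' : Fin (s + 1) → Set Z := fun j =>
    if j = Fin.last s then
      V0 (Fin.castSucc (Fin.last s)) ∩ g^[n] ⁻¹' (V0 (Fin.last (s + 1)))
    else V0 j.castSucc with hV0'
  set W' : Fin N → Fin (s + 1) → Set Z := fun i j =>
    if j = Fin.last s then
      W i (Fin.castSucc (Fin.last s)) ∩ g^[n] ⁻¹' (W i (Fin.last (s + 1)))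
    else W i j.castSucc with hW'
  have hV0'last : V0' (Fin.last s)
      = V0 (Fin.castSucc (Fin.last s)) ∩ g^[n] ⁻¹' (V0 (Fin.last (s + 1))) := by
    simp [hV0']
  have hV0'cast : ∀ j : Fin (s + 1), j ≠ Fin.last s → V0' j = V0 j.castSucc := by
    intro j hj; simp [hV0', hj]
  have hW'last : ∀ i, W' i (Fin.last s)
      = W i (Fin.castSucc (Fin.last s)) ∩ g^[n] ⁻¹' (W i (Fin.last (s + 1))) := by
    intro i; simp [hW']
  have hW'cast : ∀ i, ∀ j : Fin (s + 1), j ≠ Fin.last s → W' i j = W i j.castSucc := by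
    intro i j hj; simp [hW', hj]
  have hV0'o : ∀ j, IsOpen (V0' j) := by
    intro j
    by_cases hj : j = Fin.last s
    · rw [hj, hV0'last]
      exact (hV0o _).inter ((hV0o _).preimage (hg.iterate n))
    · rw [hV0'cast j hj]; exact hV0o _
  have hV0'n : ∀ j, (V0' j).Nonempty := by
    intro j
    by_cases hj : j = Fin.last s
    · rw [hj, hV0'last]
      obtain ⟨y, hy1, hy2⟩ := key0
      exact ⟨y, hy1, hy2⟩
    · rw [hV0'cast j hj]; exact hV0n _
  have hW'o : ∀ i j, IsOpen (W' i j) := by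
    intro i j
    by_cases hj : j = Fin.last s
    · rw [hj, hW'last]
      exact (hWo _ _).inter ((hWo _ _).preimage (hg.iterate n))
    · rw [hW'cast i j hj]; exact hWo _ _
  have hW'n : ∀ i j, (W' i j).Nonempty := by
    intro i j
    by_cases hj : j = Fin.last s
    · rw [hj, hW'last]
      obtain ⟨y, hy1, hy2⟩ := keyi i
      exact ⟨y, hy1, hy2⟩
    · rw [hW'cast i j hj]; exact hWn _ _
  obtain ⟨m, z, hz0, hzi⟩ := hwm (Set.univ.pi V0') (fun i => Set.univ.pi (W' i))
    (isOpen_set_pi Set.finite_univ (fun j _ => hV0'o j))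
    (Set.univ_pi_nonempty_iff.mpr hV0'n)
    (fun i => isOpen_set_pi Set.finite_univ (fun j _ => hW'o i j))
    (fun i => Set.univ_pi_nonempty_iff.mpr (hW'n i))
  rw [Set.mem_univ_pi] at hz0
  have hzi' : ∀ i j, (f i)^[m] (z j) ∈ W' i j := by
    intro i j
    have h := hzi i
    simp only [prodPow_iterate] at h
    rw [Set.mem_univ_pi] at h
    exact h j
  refine ⟨m, Fin.snoc z (g^[n] (z (Fin.last s))), hV0sub ?_, fun i => hWsub i ?_⟩
  · rw [Set.mem_univ_pi]
    intro j
    refine Fin.lastCases ?_ ?_ j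
    · rw [Fin.snoc_last]
      have h := hz0 (Fin.last s)
      rw [hV0'last] at h
      exact h.2
    · intro j'
      rw [Fin.snoc_castSucc]
      have h := hz0 j'
      by_cases hj : j' = Fin.last s
      · subst hj
        rw [hV0'last] at h
        exact h.1
      · rw [hV0'cast j' hj] at h
        exact h
  · simp only [prodPow_iterate]
    rw [Set.mem_univ_pi]
    intro j
    simp only [prodPow]
    refine Fin.lastCases ?_ ?_ j
    · rw [Fin.snoc_last]
      have hcom : Function.Commute g (f i) := fun y => congrFun (hcomm i) y
      have heq : (f i)^[m] (g^[n] (z (Fin.last s))) = g^[n] ((f i)^[m] (z (Fin.last s))) :=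
        ((hcom.iterate_iterate n m).symm (z (Fin.last s)))
      rw [heq]
      have hmem := hzi' i (Fin.last s)
      rw [hW'last] at hmem
      exact hmem.2
    · intro j'
      rw [Fin.snoc_castSucc]
      have hmem := hzi' i j'
      by_cases hj : j' = Fin.last s
      · subst hj
        rw [hW'last] at hmem
        exact hmem.1
      · rw [hW'cast i j' hj] at hmem
        exact hmem
end
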